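/- In a Cartan–Hadamard manifold with pinched sectional curvature −4 ≤ κ ≤ −1, let γ and γ' be geodesics with γ(−∞) = γ'(−∞) (asymptotic in backward time) but γ(+∞) ≠ γ'(+∞). Then there exists d ∈ ℝ with lim_{t→∞} (f_{−γ} − f_γ)(γ'(t)) = d, and lim_{t→−∞} (f_{−γ} + f_γ)(γ'(t)) = 0. -/

import Mathlib

open Filter Metric

noncomputable section

variable {M : Type*}

/-- A unit-speed geodesic line in a metric space: an isometric embedding of `ℝ`. -/
def IsUnitSpeedGeodesic [MetricSpace M] (c : ℝ → M) : Prop :=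
  ∀ s t : ℝ, dist (c s) (c t) = |s - t|

/-- The Busemann function of `γ`:
`f_γ(p) = lim_{t→∞} (dist(p, γ(t)) − t)`.  For a unit-speed geodesic line the
function `t ↦ dist(p, γ(t)) − t` is nonincreasing and bounded below, so the
limit coincides with the infimum, which we take as the definition. -/
noncomputable def busemannF [MetricSpace M] (γ : ℝ → M) (p : M) : ℝ :=
  ⨅ t : ℝ, (dist p (γ t) - t)

/-- The metric space `M` is a Hadamard (Cartan–Hadamard) space: complete,
geodesic, with globally convex distance function (Busemann nonpositive
curvature); in a Cartan–Hadamard manifold every geodesic segment extends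
to a line, which is reflected in the statement of `geod`. -/
structure IsHadamard (M : Type*) [MetricSpace M] : Prop where
  complete : CompleteSpace M
  proper : ProperSpace M
  geod : ∀ x y : M, ∃ c : ℝ → M, IsUnitSpeedGeodesic c ∧ c 0 = x ∧ c (dist x y) = y
  convex : ∀ c₁ c₂ : ℝ → M, IsUnitSpeedGeodesic c₁ → IsUnitSpeedGeodesic c₂ →
    ConvexOn ℝ Set.univ fun t => dist (c₁ t) (c₂ t)

/-- Comparison encoding of the sectional curvature upper bound `κ ≤ −1`:
at a foot point `c s` of `p` on a geodesic line `c`, the Busemann functions of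
`c` and of its reversal satisfy the real-hyperbolic comparison
`f_c(p) ≥ −s + log cosh d`, `f_{−c}(p) ≥ s + log cosh d`, where
`d = dist(p, c(s))` (equality holds in constant curvature `−1`). -/
def SecLEneg1 (M : Type*) [MetricSpace M] : Prop :=
  ∀ c : ℝ → M, IsUnitSpeedGeodesic c → ∀ p : M, ∀ s : ℝ,
    dist p (c s) = Metric.infDist p (Set.range c) →
      (-s + Real.log (Real.cosh (dist p (c s))) ≤ busemannF c p ∧
       s + Real.log (Real.cosh (dist p (c s))) ≤ busemannF (fun t => c (-t)) p)

/-- Comparison encoding of the sectional curvature lower bound `κ ≥ −4`: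
the reversed inequalities against the model of constant curvature `−4`,
where the comparison function is `(1/2) log cosh (2d)`. -/
def SecGEneg4 (M : Type*) [MetricSpace M] : Prop :=
  ∀ c : ℝ → M, IsUnitSpeedGeodesic c → ∀ p : M, ∀ s : ℝ,
    dist p (c s) = Metric.infDist p (Set.range c) →
      (busemannF c p ≤ -s + (1 / 2) * Real.log (Real.cosh (2 * dist p (c s))) ∧
       busemannF (fun t => c (-t)) p ≤ s + (1 / 2) * Real.log (Real.cosh (2 * dist p (c s))))

/-! Along `γ'`, the function `t ↦ f_{-γ}(γ' t) - t` is convex, antitone (`f_{-γ}` is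
`1`-Lipschitz) and, by backward asymptoticity, bounded above; a convex function on `ℝ` that is
bounded above is nondecreasing, so `f_{-γ}(γ' t) = t + b` for a constant `b`.

Forward: `t - f_γ(γ' t)` is nondecreasing because `f_γ` is `1`-Lipschitz, and it is bounded
because the comparison inequality for `κ ≤ -1` confines the foot points of `γ' t` on `γ` to a
half-line `(-∞, S]`: beyond `S` the Busemann sum `f_{γ'} + f_{-γ'}` is large on `γ`, since
`γ` diverges from `γ'` there.

Backward: the Busemann sum `φ = f_γ + f_{-γ}` is nonnegative, convex along geodesics, vanishes
on `γ` and is `2`-Lipschitz. For `u ≪ t`, the comparison inequality puts `γ' t` within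
`arcosh (exp (e/2))` of the segment from `γ 0` to `γ' u`, where
`e = d(γ' t, γ 0) + t - f_{-γ'}(γ 0) → 0` as `t → -∞`, at a parameter bounded independently of
`u`. Along that segment `φ` starts at `0` and is convex, so it is `O(1 / d(γ 0, γ' u))` there. -/

open Set Real Topology

theorem Real.sub_log_two_le_log_cosh (x : ℝ) : x - log 2 ≤ log (cosh x) := by
  have h : exp x / 2 ≤ cosh x := by rw [cosh_eq]; linarith [exp_pos (-x)]
  have := log_le_log (by positivity) h
  rwa [log_div (exp_pos x).ne' two_ne_zero, log_exp] at this

theorem Real.le_arcosh_exp {x y : ℝ} (hx : 0 ≤ x) (h : log (cosh x) ≤ y) :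
    x ≤ arcosh (exp y) := by
  rw [← arcosh_cosh hx, arcosh_le_arcosh (cosh_pos x) (exp_pos y)]
  exact (log_le_iff_le_exp (cosh_pos x)).1 h

theorem Real.continuous_arcosh_exp : Continuous fun y => arcosh (exp y) := by
  unfold arcosh
  fun_prop (disch := exact fun y => (add_pos_of_pos_of_nonneg (exp_pos y) (sqrt_nonneg _)).ne')

theorem ConvexOn.monotoneOn_Iic_of_bddAbove {f : ℝ → ℝ} {r : ℝ} (hf : ConvexOn ℝ (Iic r) f)
    (hbdd : BddAbove (f '' Iic r)) : MonotoneOn f (Iic r) := by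
  intro x hx y hy hxy
  by_contra! hyx
  obtain ⟨A, hA⟩ := hbdd
  have hxy' : x < y := lt_of_le_of_ne hxy (by rintro rfl; exact lt_irrefl _ hyx)
  set m := (f x - f y) / (y - x)
  have hm : 0 < m := div_pos (by linarith) (by linarith)
  have hAx : f x ≤ A := hA ⟨x, hx, rfl⟩
  -- far enough to the left the slope `-m` pushes `f` above `A`
  set t := x - (A - f x + 1) / m
  have hxt : x - t = (A - f x + 1) / m := by ring
  have htx : t < x := by linarith [div_pos (by linarith : 0 < A - f x + 1) hm]
  have ht : t ∈ Iic r := htx.le.trans hx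
  have hslope := hf.slope_mono_adjacent ht hy htx hxy'
  have hslope_eq : (f y - f x) / (y - x) = -m := by rw [← neg_div, neg_sub]
  have hmxt : m * (x - t) = A - f x + 1 := by rw [hxt]; field_simp
  rw [hslope_eq, div_le_iff₀ (sub_pos.2 htx)] at hslope
  linarith [hA ⟨t, ht, rfl⟩]

theorem ConvexOn.tendsto_atTop_of_not_bddAbove {f : ℝ → ℝ} {a : ℝ} (hf : ConvexOn ℝ (Ici a) f)
    (hf' : ¬ BddAbove (f '' Ici a)) : Tendsto f atTop atTop := by
  refine tendsto_atTop.2 fun R => ?_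
  obtain ⟨_, ⟨σ, hσ, rfl⟩, hσR⟩ := not_bddAbove_iff.1 hf' (max R (f a))
  refine eventually_atTop.2 ⟨σ, fun t ht => ?_⟩
  have := hf.le_on_segment self_mem_Ici (mem_Ici.2 (hσ.trans ht)) (Icc_subset_segment ⟨hσ, ht⟩)
  rw [max_lt_iff] at hσR
  rcases le_max_iff.1 this with h | h <;> linarith

theorem ConvexOn.le_div_mul_of_map_zero {f : ℝ → ℝ} (hf : ConvexOn ℝ univ f) (hf0 : f 0 = 0)
    {s l : ℝ} (hs : 0 ≤ s) (hsl : s ≤ l) (hl : 0 < l) : f s ≤ s / l * f l := by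
  have := hf.2 (mem_univ 0) (mem_univ l) (by rw [sub_nonneg, div_le_one hl]; exact hsl)
    (div_nonneg hs hl.le) (sub_add_cancel 1 (s / l))
  rwa [smul_eq_mul, smul_eq_mul, mul_zero, zero_add, div_mul_cancel₀ _ hl.ne', smul_eq_mul,
    smul_eq_mul, hf0, mul_zero, zero_add] at this

section

variable [MetricSpace M] {c c₂ γ γ' : ℝ → M}

namespace IsUnitSpeedGeodesic

theorem reverse (hc : IsUnitSpeedGeodesic c) : IsUnitSpeedGeodesic fun t => c (-t) := by
  intro s t
  rw [hc, ← abs_neg]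
  ring_nf

theorem comp_add_right (hc : IsUnitSpeedGeodesic c) (σ : ℝ) :
    IsUnitSpeedGeodesic fun t => c (t + σ) := by
  intro s t
  rw [hc]
  ring_nf

theorem isometry (hc : IsUnitSpeedGeodesic c) : Isometry c :=
  Isometry.of_dist_eq fun s t => (hc s t).trans (Real.dist_eq s t).symm

theorem exists_dist_eq_infDist (hc : IsUnitSpeedGeodesic c) (p : M) :
    ∃ s, dist p (c s) = infDist p (range c) := by
  obtain ⟨s, hs⟩ : ∃ s, ∀ t, dist p (c s) ≤ dist p (c t) := by
    refine (continuous_const.dist hc.isometry.continuous).exists_forall_le ?_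
    refine tendsto_atTop_mono (fun t => ?_)
      (tendsto_atTop_add_const_right _ (-dist p (c 0)) tendsto_norm_cocompact_atTop)
    have h := dist_triangle_left (c 0) (c t) p
    rw [hc, zero_sub, abs_neg] at h
    rw [Real.norm_eq_abs]
    linarith
  refine ⟨s, le_antisymm ((le_infDist (range_nonempty c)).2 ?_)
    (infDist_le_dist_of_mem (mem_range_self s))⟩
  rintro _ ⟨t, rfl⟩
  exact hs t

theorem bddBelow_dist_sub (hc : IsUnitSpeedGeodesic c) (p : M) :
    BddBelow (range fun τ => dist p (c τ) - τ) := by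
  refine ⟨-dist p (c 0), ?_⟩
  rintro _ ⟨τ, rfl⟩
  have h := dist_triangle_left (c 0) (c τ) p
  rw [hc, zero_sub, abs_neg] at h
  linarith [le_abs_self τ]

theorem busemannF_le (hc : IsUnitSpeedGeodesic c) (p : M) (τ : ℝ) :
    busemannF c p ≤ dist p (c τ) - τ :=
  ciInf_le (hc.bddBelow_dist_sub p) τ

theorem tendsto_busemannF (hc : IsUnitSpeedGeodesic c) (p : M) :
    Tendsto (fun τ => dist p (c τ) - τ) atTop (𝓝 (busemannF c p)) := by
  refine tendsto_atTop_ciInf (fun τ₁ τ₂ h => ?_) (hc.bddBelow_dist_sub p)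
  have h' := dist_triangle p (c τ₁) (c τ₂)
  rw [hc, abs_sub_comm, abs_of_nonneg (sub_nonneg.2 h)] at h'
  linarith

theorem busemannF_le_add_dist (hc : IsUnitSpeedGeodesic c) (p q : M) :
    busemannF c p ≤ busemannF c q + dist p q := by
  have : busemannF c p - dist p q ≤ busemannF c q :=
    le_ciInf fun τ => by linarith [hc.busemannF_le p τ, dist_triangle p q (c τ)]
  linarith

theorem busemannF_comp_le (hc : IsUnitSpeedGeodesic c) (hc₂ : IsUnitSpeedGeodesic c₂) (s t : ℝ) :
    busemannF c (c₂ s) ≤ busemannF c (c₂ t) + |s - t| :=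
  hc₂ s t ▸ hc.busemannF_le_add_dist (c₂ s) (c₂ t)

theorem busemannF_apply_self (hc : IsUnitSpeedGeodesic c) (s : ℝ) : busemannF c (c s) = -s :=
  le_antisymm (by simpa using hc.busemannF_le (c s) s)
    (le_ciInf fun τ => by rw [hc]; linarith [neg_le_abs (s - τ)])

theorem busemannF_neg_apply_self (hc : IsUnitSpeedGeodesic c) (s : ℝ) :
    busemannF (fun t => c (-t)) (c s) = s := by
  simpa using hc.reverse.busemannF_apply_self (-s)

end IsUnitSpeedGeodesic

def busemannSum (c : ℝ → M) (p : M) : ℝ :=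
  busemannF c p + busemannF (fun t => c (-t)) p

namespace IsUnitSpeedGeodesic

theorem busemannSum_nonneg (hc : IsUnitSpeedGeodesic c) (p : M) : 0 ≤ busemannSum c p := by
  have : -busemannF (fun t => c (-t)) p ≤ busemannF c p := le_ciInf fun τ => by
    linarith [hc.busemannF_neg_apply_self τ ▸ hc.reverse.busemannF_le_add_dist (c τ) p,
      dist_comm (c τ) p]
  unfold busemannSum
  linarith

theorem busemannSum_apply_self (hc : IsUnitSpeedGeodesic c) (s : ℝ) : busemannSum c (c s) = 0 := by
  rw [busemannSum, hc.busemannF_apply_self, hc.busemannF_neg_apply_self, neg_add_cancel]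

theorem busemannSum_le_add_two_mul_dist (hc : IsUnitSpeedGeodesic c) (p q : M) :
    busemannSum c p ≤ busemannSum c q + 2 * dist p q := by
  unfold busemannSum
  linarith [hc.busemannF_le_add_dist p q, hc.reverse.busemannF_le_add_dist p q]

end IsUnitSpeedGeodesic

namespace IsHadamard

theorem convexOn_busemannF_comp (hM : IsHadamard M) (hc : IsUnitSpeedGeodesic c)
    (hc₂ : IsUnitSpeedGeodesic c₂) : ConvexOn ℝ univ fun t => busemannF c (c₂ t) := by
  refine ⟨convex_univ, fun x _ y _ a b ha hb hab => ?_⟩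
  have hlim (z : ℝ) :
      Tendsto (fun σ => dist (c₂ z) (c (z + σ)) - (z + σ)) atTop (𝓝 (busemannF c (c₂ z))) :=
    (hc.tendsto_busemannF (c₂ z)).comp (tendsto_atTop_add_const_left _ z tendsto_id)
  refine le_of_tendsto_of_tendsto' (hlim _) (((hlim x).const_smul a).add ((hlim y).const_smul b))
    fun σ => ?_
  have hd := (hM.convex c₂ _ hc₂ (hc.comp_add_right σ)).2 (mem_univ x) (mem_univ y) ha hb hab
  simp only [smul_eq_mul] at hd ⊢
  linear_combination hd + σ * hab

theorem convexOn_busemannSum_comp (hM : IsHadamard M) (hc : IsUnitSpeedGeodesic c)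
    (hc₂ : IsUnitSpeedGeodesic c₂) : ConvexOn ℝ univ fun t => busemannSum c (c₂ t) :=
  (hM.convexOn_busemannF_comp hc hc₂).add (hM.convexOn_busemannF_comp hc.reverse hc₂)

theorem busemannF_neg_comp_eq_add (hM : IsHadamard M) (hc : IsUnitSpeedGeodesic c)
    (hc₂ : IsUnitSpeedGeodesic c₂) {C : ℝ} (hC : ∀ t ≤ (0 : ℝ), dist (c t) (c₂ t) ≤ C) (t : ℝ) :
    busemannF (fun s => c (-s)) (c₂ t) = t + busemannF (fun s => c (-s)) (c₂ 0) := by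
  set g : ℝ → ℝ := fun u => busemannF (fun s => c (-s)) (c₂ u) - u
  have hanti : Antitone g := fun u v huv => by
    linarith [hc.reverse.busemannF_comp_le hc₂ v u, abs_of_nonneg (sub_nonneg.2 huv)]
  -- `g u ≤ dist (c₂ u) (c u)` for `u ≤ 0`, by evaluating the infimum at time `-u`
  have hbdd : ∀ u, g u ≤ C := by
    intro u
    rcases le_total u 0 with hu | hu
    · have := hc.reverse.busemannF_le (c₂ u) (-u)
      simp only [neg_neg] at this
      linarith [hC u hu, dist_comm (c u) (c₂ u)]
    · have := hc.reverse.busemannF_le (c₂ 0) 0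
      simp only [neg_zero, sub_zero] at this
      linarith [hanti hu, hC 0 le_rfl, dist_comm (c 0) (c₂ 0)]
  have hconv : ConvexOn ℝ univ g :=
    (hM.convexOn_busemannF_comp hc.reverse hc₂).sub (concaveOn_id convex_univ)
  have hmono (r : ℝ) : MonotoneOn g (Iic r) :=
    (hconv.subset (subset_univ _) (convex_Iic r)).monotoneOn_Iic_of_bddAbove
      ⟨C, by rintro _ ⟨u, -, rfl⟩; exact hbdd u⟩
  have : g t = g 0 := by
    rcases le_total t 0 with ht | ht
    · exact le_antisymm (hmono 0 ht self_mem_Iic ht) (hanti ht)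
    · exact le_antisymm (hanti ht) (hmono t (mem_Iic.2 ht) self_mem_Iic ht)
  simp only [g] at this
  linarith

end IsHadamard

namespace SecLEneg1

theorem exists_log_cosh_dist_le (h : SecLEneg1 M) (hc : IsUnitSpeedGeodesic c) (p : M) :
    ∃ s, -s + log (cosh (dist p (c s))) ≤ busemannF c p ∧
      s + log (cosh (dist p (c s))) ≤ busemannF (fun t => c (-t)) p :=
  let ⟨s, hs⟩ := hc.exists_dist_eq_infDist p
  ⟨s, h c hc p s hs⟩

theorem exists_near_segment (h : SecLEneg1 M) (hc : IsUnitSpeedGeodesic c) (p : M) (l : ℝ) :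
    ∃ s, l - dist p (c l) ≤ s ∧ s ≤ dist p (c 0) ∧
      2 * log (cosh (dist p (c s))) ≤ dist p (c 0) + dist p (c l) - l := by
  obtain ⟨s, h₁, h₂⟩ := h.exists_log_cosh_dist_le hc p
  have h₀ := hc.reverse.busemannF_le p 0
  simp only [neg_zero, sub_zero] at h₀
  have := log_nonneg (one_le_cosh (dist p (c s)))
  exact ⟨s, by linarith [hc.busemannF_le p l], by linarith, by linarith [hc.busemannF_le p l]⟩

theorem dist_le_busemannSum_add (h : SecLEneg1 M) (hc : IsUnitSpeedGeodesic c) (p : M) (σ : ℝ) :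
    dist p (c σ) ≤ busemannSum c p + 2 * log 2 + |busemannF (fun t => c (-t)) p - σ| := by
  obtain ⟨u, h₁, h₂⟩ := h.exists_log_cosh_dist_le hc p
  set D := dist p (c u)
  set β := busemannF (fun t => c (-t)) p - σ
  have hu : σ + β ≤ u + D := by
    simpa [β, hc.busemannF_neg_apply_self u] using hc.reverse.busemannF_le_add_dist p (c u)
  have hu' : u - σ ≤ β := by linarith [log_nonneg (one_le_cosh D)]
  have hσ : dist p (c σ) ≤ D + |u - σ| := hc u σ ▸ dist_triangle _ _ _
  have hβ := abs_le.2 (⟨by linarith [neg_abs_le β], by linarith [le_abs_self β]⟩ :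
    -(D + |β|) ≤ u - σ ∧ u - σ ≤ D + |β|)
  unfold busemannSum
  linarith [sub_log_two_le_log_cosh D]

end SecLEneg1

theorem tendsto_busemannSum_comp_atTop (hM : IsHadamard M) (hupper : SecLEneg1 M)
    (hγ : IsUnitSpeedGeodesic γ) (hγ' : IsUnitSpeedGeodesic γ') {β : ℝ}
    (hβ : ∀ σ, busemannF (fun t => γ' (-t)) (γ σ) = σ + β)
    (hfwd : ¬ ∃ C : ℝ, ∀ t ≥ (0 : ℝ), dist (γ t) (γ' t) ≤ C) :
    Tendsto (fun σ => busemannSum γ' (γ σ)) atTop atTop := by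
  have hdist : Tendsto (fun σ => dist (γ σ) (γ' σ)) atTop atTop :=
    ((hM.convex γ γ' hγ hγ').subset (subset_univ _) (convex_Ici 0)).tendsto_atTop_of_not_bddAbove
      fun ⟨C, hC⟩ => hfwd ⟨C, fun t ht => hC ⟨t, ht, rfl⟩⟩
  refine tendsto_atTop_mono (fun σ => ?_)
    (tendsto_atTop_add_const_right _ (-(2 * log 2 + |β|)) hdist)
  have := hupper.dist_le_busemannSum_add hγ' (γ σ) σ
  rw [hβ, add_sub_cancel_left] at this
  linarith

theorem exists_forall_sub_busemannF_le (hM : IsHadamard M) (hupper : SecLEneg1 M)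
    (hγ : IsUnitSpeedGeodesic γ) (hγ' : IsUnitSpeedGeodesic γ')
    {C : ℝ} (hC : ∀ t ≤ (0 : ℝ), dist (γ t) (γ' t) ≤ C)
    (hfwd : ¬ ∃ C : ℝ, ∀ t ≥ (0 : ℝ), dist (γ t) (γ' t) ≤ C) :
    ∃ K, ∀ t, t - busemannF γ (γ' t) ≤ K := by
  set b := busemannF (fun s => γ (-s)) (γ' 0)
  set b' := busemannF (fun s => γ' (-s)) (γ 0)
  have hb : ∀ t, busemannF (fun s => γ (-s)) (γ' t) = t + b :=
    hM.busemannF_neg_comp_eq_add hγ hγ' hC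
  have hb' : ∀ σ, busemannF (fun s => γ' (-s)) (γ σ) = σ + b' :=
    hM.busemannF_neg_comp_eq_add hγ' hγ fun t ht => dist_comm (γ' t) (γ t) ▸ hC t ht
  obtain ⟨S, hS⟩ := eventually_atTop.1 <|
    (tendsto_busemannSum_comp_atTop hM hupper hγ hγ' hb' hfwd).eventually_gt_atTop (log 2 + b + b')
  refine ⟨2 * S - b + log 2, fun t => ?_⟩
  obtain ⟨s, h₁, h₂⟩ := hupper.exists_log_cosh_dist_le hγ (γ' t)
  set D := dist (γ' t) (γ s)
  rw [hb t] at h₂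
  have hD := sub_log_two_le_log_cosh D
  -- a foot point far out on `γ` would be close to `γ'`, where the Busemann sum of `γ'` is large
  have hs : s < S := by
    by_contra! hSs
    have hsum := hS s hSs
    have := hγ'.busemannF_le (γ s) t
    rw [busemannSum, hb' s] at hsum
    rw [dist_comm] at this
    linarith
  have hts : t + b ≤ s + D := by
    simpa [hb t, hγ.busemannF_neg_apply_self s, dist_comm, D] using
      hγ.reverse.busemannF_le_add_dist (γ' t) (γ s)
  linarith

theorem exists_tendsto_busemannF_sub (hM : IsHadamard M) (hupper : SecLEneg1 M)
    (hγ : IsUnitSpeedGeodesic γ) (hγ' : IsUnitSpeedGeodesic γ')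
    {C : ℝ} (hC : ∀ t ≤ (0 : ℝ), dist (γ t) (γ' t) ≤ C)
    (hfwd : ¬ ∃ C : ℝ, ∀ t ≥ (0 : ℝ), dist (γ t) (γ' t) ≤ C) :
    ∃ d, Tendsto (fun t => busemannF (fun s => γ (-s)) (γ' t) - busemannF γ (γ' t))
      atTop (𝓝 d) := by
  obtain ⟨K, hK⟩ := exists_forall_sub_busemannF_le hM hupper hγ hγ' hC hfwd
  have hmono : Monotone fun t => t - busemannF γ (γ' t) := fun u v huv => by
    dsimp only
    linarith [hγ.busemannF_comp_le hγ' v u, abs_of_nonneg (sub_nonneg.2 huv)]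
  have hlim := (tendsto_atTop_ciSup hmono ⟨K, by rintro _ ⟨t, rfl⟩; exact hK t⟩).const_add
    (busemannF (fun s => γ (-s)) (γ' 0))
  refine ⟨_, hlim.congr fun t => ?_⟩
  rw [hM.busemannF_neg_comp_eq_add hγ hγ' hC t]
  ring

theorem monotone_busemannSum_comp (hγ : IsUnitSpeedGeodesic γ) (hγ' : IsUnitSpeedGeodesic γ')
    {b : ℝ} (hb : ∀ t, busemannF (fun s => γ (-s)) (γ' t) = t + b) :
    Monotone fun t => busemannSum γ (γ' t) := fun u v huv => by
  simp only [busemannSum, hb]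
  linarith [hγ.busemannF_comp_le hγ' u v, abs_of_nonpos (sub_nonpos.2 huv)]

theorem busemannSum_le_two_mul_arcosh (hM : IsHadamard M) (hupper : SecLEneg1 M)
    (hγ : IsUnitSpeedGeodesic γ) (hγ' : IsUnitSpeedGeodesic γ')
    {b : ℝ} (hb : ∀ t, busemannF (fun s => γ (-s)) (γ' t) = t + b)
    {t : ℝ} (ht : t ≤ busemannF (fun s => γ' (-s)) (γ 0)) :
    busemannSum γ (γ' t) ≤
      2 * arcosh (exp ((dist (γ' t) (γ 0) + t - busemannF (fun s => γ' (-s)) (γ 0)) / 2)) := by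
  set b' := busemannF (fun s => γ' (-s)) (γ 0)
  set P := dist (γ' t) (γ 0)
  set A := arcosh (exp ((P + t - b') / 2))
  set φ := fun u => busemannSum γ (γ' u)
  have hL (u : ℝ) : b' - u ≤ dist (γ 0) (γ' u) := by
    simpa using hγ'.reverse.busemannF_le (γ 0) (-u)
  -- `γ' t` lies near the segment from `γ 0` to `γ' u`, along which `φ` grows at most linearly
  have hbound : ∀ u ≤ min t (b' - P - 1), φ t ≤ P / dist (γ 0) (γ' u) * φ t + 2 * A := by
    intro u hu
    rw [le_min_iff] at hu
    set L := dist (γ 0) (γ' u)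
    have hLpos : 0 < L := by linarith [hL u, dist_nonneg (x := γ' t) (y := γ 0)]
    obtain ⟨c, hc, hc0, hcL⟩ := hM.geod (γ 0) (γ' u)
    obtain ⟨s, hs₁, hs₂, hD⟩ := hupper.exists_near_segment hc (γ' t) L
    have htu : dist (γ' t) (c L) = t - u := by
      rw [hcL, hγ' t u, abs_of_nonneg (sub_nonneg.2 hu.1)]
    rw [hc0] at hs₂ hD
    rw [htu] at hs₁ hD
    have hs₀ : 0 ≤ s := by linarith [hL u]
    have hDA : dist (γ' t) (c s) ≤ A := le_arcosh_exp dist_nonneg (by linarith [hL u])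
    have hcs : busemannSum γ (c s) ≤ s / L * φ u := by
      have h0 : busemannSum γ (c 0) = 0 := hc0 ▸ hγ.busemannSum_apply_self 0
      have := (hM.convexOn_busemannSum_comp hγ hc).le_div_mul_of_map_zero h0 hs₀
        (by linarith [hL u]) hLpos
      rwa [hcL] at this
    calc φ t ≤ busemannSum γ (c s) + 2 * dist (γ' t) (c s) :=
          hγ.busemannSum_le_add_two_mul_dist _ _
      _ ≤ s / L * φ u + 2 * A := by gcongr
      _ ≤ P / L * φ t + 2 * A := by
          gcongr
          exacts [hγ.busemannSum_nonneg _, monotone_busemannSum_comp hγ hγ' hb hu.1]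
  have hLtend : Tendsto (fun u => dist (γ 0) (γ' u)) atBot atTop :=
    tendsto_atTop_mono hL (tendsto_atTop_add_const_left _ b' tendsto_neg_atBot_atTop)
  have hlim : Tendsto (fun u => P / dist (γ 0) (γ' u) * φ t + 2 * A) atBot (𝓝 (2 * A)) := by
    simpa using ((tendsto_const_nhds.div_atTop hLtend).mul_const (φ t)).add_const (2 * A)
  exact ge_of_tendsto hlim (eventually_atBot.2 ⟨_, hbound⟩)

theorem tendsto_busemannSum_comp_atBot (hM : IsHadamard M) (hupper : SecLEneg1 M)
    (hγ : IsUnitSpeedGeodesic γ) (hγ' : IsUnitSpeedGeodesic γ')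
    {C : ℝ} (hC : ∀ t ≤ (0 : ℝ), dist (γ t) (γ' t) ≤ C) :
    Tendsto (fun t => busemannSum γ (γ' t)) atBot (𝓝 0) := by
  have he : Tendsto (fun t => dist (γ' t) (γ 0) + t - busemannF (fun s => γ' (-s)) (γ 0)) atBot
      (𝓝 0) := by
    have := ((hγ'.reverse.tendsto_busemannF (γ 0)).comp tendsto_neg_atBot_atTop).sub_const
      (busemannF (fun s => γ' (-s)) (γ 0))
    rw [sub_self] at this
    refine this.congr fun t => ?_
    simp [dist_comm]
  have hA : Tendsto (fun t => 2 * arcosh (exp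
      ((dist (γ' t) (γ 0) + t - busemannF (fun s => γ' (-s)) (γ 0)) / 2))) atBot (𝓝 0) := by
    simpa [arcosh_zero] using
      ((continuous_arcosh_exp.tendsto 0).comp (by simpa using he.div_const 2)).const_mul 2
  refine tendsto_of_tendsto_of_tendsto_of_le_of_le' tendsto_const_nhds hA
    (Eventually.of_forall fun t => hγ.busemannSum_nonneg _)
    (eventually_atBot.2 ⟨busemannF (fun s => γ' (-s)) (γ 0), fun t ht => ?_⟩)
  exact busemannSum_le_two_mul_arcosh hM hupper hγ hγ' (hM.busemannF_neg_comp_eq_add hγ hγ' hC) ht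

end

theorem busemann_sum_difference_asymptotics_general (M : Type*) [MetricSpace M]
    (hM : IsHadamard M) (hupper : SecLEneg1 M)
    (γ γ' : ℝ → M) (hγ : IsUnitSpeedGeodesic γ) (hγ' : IsUnitSpeedGeodesic γ')
    (hback : ∃ C : ℝ, ∀ t ≤ (0 : ℝ), dist (γ t) (γ' t) ≤ C)
    (hfwd : ¬ ∃ C : ℝ, ∀ t ≥ (0 : ℝ), dist (γ t) (γ' t) ≤ C) :
    (∃ d : ℝ, Tendsto
      (fun t => busemannF (fun s => γ (-s)) (γ' t) - busemannF γ (γ' t))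
      atTop (nhds d)) ∧
    Tendsto (fun t => busemannF (fun s => γ (-s)) (γ' t) + busemannF γ (γ' t))
      atBot (nhds 0) := by
  obtain ⟨C, hC⟩ := hback
  refine ⟨exists_tendsto_busemannF_sub hM hupper hγ hγ' hC hfwd, ?_⟩
  simpa only [busemannSum, add_comm] using tendsto_busemannSum_comp_atBot hM hupper hγ hγ' hC

/-- in a Cartan–Hadamard space with pinched curvature
`−4 ≤ κ ≤ −1`, if `γ, γ'` are geodesic lines with `γ(−∞) = γ'(−∞)` (backward
asymptotic) but `γ(+∞) ≠ γ'(+∞)` (not forward asymptotic), then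
`(f_{−γ} − f_γ)(γ'(t))` converges to some constant `d` as `t → +∞`, and
`(f_{−γ} + f_γ)(γ'(t)) → 0` as `t → −∞`. -/
theorem busemann_sum_difference_asymptotics (M : Type*) [MetricSpace M]
    (hM : IsHadamard M) (hupper : SecLEneg1 M) (hlower : SecGEneg4 M)
    (γ γ' : ℝ → M) (hγ : IsUnitSpeedGeodesic γ) (hγ' : IsUnitSpeedGeodesic γ')
    (hback : ∃ C : ℝ, ∀ t ≤ (0 : ℝ), dist (γ t) (γ' t) ≤ C)
    (hfwd : ¬ ∃ C : ℝ, ∀ t ≥ (0 : ℝ), dist (γ t) (γ' t) ≤ C) :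
    (∃ d : ℝ, Tendsto
      (fun t => busemannF (fun s => γ (-s)) (γ' t) - busemannF γ (γ' t))
      atTop (nhds d)) ∧
    Tendsto (fun t => busemannF (fun s => γ (-s)) (γ' t) + busemannF γ (γ' t))
      atBot (nhds 0) :=
  busemann_sum_difference_asymptotics_general M hM hupper γ γ' hγ hγ' hback hfwd
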